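/- There exists a constant C > 0 and X > 0 such that for all x ≥ X, |Γ(x+1) / (x^x · e^{-x} · √(2π(x + 1/6))) − 1| ≤ C/x² (Gosper's approximation with quadratic error). -/

import Mathlib

/-
Let `μ(x) = log Γ(x) - ((x - 1/2) log x - x + log (2π) / 2)` be the remainder in Stirling's
formula. Since `1 + 1/a = (1 + s) / (1 - s)` for `s = 1/(2a + 1)`, the artanh series gives
`s + s³/3 ≤ log (1 + 1/a) / 2 ≤ s + 1/(12 a (a + 1) (2a + 1))`. Applied to
`μ(x) - μ(x + 1) = (x + 1/2) log (1 + 1/x) - 1`, this squeezes each step between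
`1/(12x + 1) - 1/(12x + 13)` and `1/(12x) - 1/(12(x + 1))`; as `μ(x + N) → 0` (Stirling's formula
for factorials together with log-convexity of `Γ`), telescoping yields Robbins' bounds
`1/(12x + 1) ≤ μ(x) ≤ 1/(12x)`. The Gosper ratio equals `exp (μ(x) - log (1 + 1/(6x)) / 2)`, and
with `a = 6x` the same artanh bounds place `log (1 + 1/(6x)) / 2` within `O(x⁻³)` of
`1/(12x + 1)`, so the exponent is `O(x⁻²)`.
-/

open Real

open Filter Topology

lemma add_cube_div_three_le_half_log_one_add_inv {a : ℝ} (ha : 0 < a) :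
    1 / (2 * a + 1) + 1 / (3 * (2 * a + 1) ^ 3) ≤ log (1 + a⁻¹) / 2 := by
  have h := sum_le_hasSum (Finset.range 2) (fun k _ => by positivity) (hasSum_log_one_add_inv ha)
  norm_num [Finset.sum_range_succ] at h
  linarith [show 1 / (2 * a + 1) + 1 / (3 * (2 * a + 1) ^ 3)
    = (2 * (2 * a + 1)⁻¹ + 2 / 3 * ((2 * a + 1) ^ 3)⁻¹) / 2 by field_simp]

lemma half_log_one_add_inv_le {a : ℝ} (ha : 0 < a) :
    log (1 + a⁻¹) / 2 ≤ 1 / (2 * a + 1) + 1 / (12 * a * (a + 1) * (2 * a + 1)) := by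
  set s := 1 / (2 * a + 1) with hs
  have hs1 : s ^ 2 < 1 := by
    rw [hs, div_pow, one_pow, div_lt_one (by positivity)]; nlinarith
  -- the tail of the artanh series after its first term is dominated by a geometric series
  have hgeo := (hasSum_geometric_of_lt_one (sq_nonneg _) hs1).mul_left (2 * s ^ 3 / 3)
  have hle := hasSum_le (fun k => ?_) ((hasSum_nat_add_iff' 1).mpr (hasSum_log_one_add_inv ha)) hgeo
  · have hsum : 2 * s ^ 3 / 3 * (1 - s ^ 2)⁻¹ = 2 * (1 / (12 * a * (a + 1) * (2 * a + 1))) := by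
      have : 1 - s ^ 2 = 4 * a * (a + 1) / (2 * a + 1) ^ 2 := by rw [hs]; field_simp; ring
      rw [this, hs]; field_simp; norm_num
    norm_num at hle
    linarith [show s = (2 * a + 1)⁻¹ from one_div _]
  · have h3 : (3 : ℝ) ≤ 2 * ((k + 1 : ℕ) : ℝ) + 1 := by push_cast; linarith [k.cast_nonneg (α := ℝ)]
    calc 2 * (1 / (2 * ((k + 1 : ℕ) : ℝ) + 1)) * s ^ (2 * (k + 1) + 1)
        = 2 / (2 * ((k + 1 : ℕ) : ℝ) + 1) * (s ^ 3 * (s ^ 2) ^ k) := by ring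
      _ ≤ 2 / 3 * (s ^ 3 * (s ^ 2) ^ k) := by gcongr
      _ = 2 * s ^ 3 / 3 * (s ^ 2) ^ k := by ring

lemma mul_log_one_add_inv_sub_one_le {y : ℝ} (hy : 0 < y) :
    (y + 1 / 2) * log (1 + y⁻¹) - 1 ≤ 1 / (12 * y) - 1 / (12 * (y + 1)) := by
  have h := half_log_one_add_inv_le hy
  have e : (2 * y + 1) * (1 / (2 * y + 1) + 1 / (12 * y * (y + 1) * (2 * y + 1))) - 1
      = 1 / (12 * y) - 1 / (12 * (y + 1)) := by field_simp; ring
  rw [← e]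
  nlinarith

lemma le_mul_log_one_add_inv_sub_one {y : ℝ} (hy : 1 ≤ y) :
    1 / (12 * y + 1) - 1 / (12 * (y + 1) + 1) ≤ (y + 1 / 2) * log (1 + y⁻¹) - 1 := by
  have h := add_cube_div_three_le_half_log_one_add_inv (by linarith : 0 < y)
  have e : (2 * y + 1) * (1 / (2 * y + 1) + 1 / (3 * (2 * y + 1) ^ 3)) - 1
      = 1 / (3 * (2 * y + 1) ^ 2) := by field_simp; ring
  calc 1 / (12 * y + 1) - 1 / (12 * (y + 1) + 1) ≤ 1 / (3 * (2 * y + 1) ^ 2) := by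
        rw [div_sub_div _ _ (by positivity) (by positivity),
          div_le_div_iff₀ (by positivity) (by positivity)]
        nlinarith
    _ ≤ _ := by rw [← e]; nlinarith

lemma tendsto_add_sub_half_mul_log_one_add_div_sub (t : ℝ) :
    Tendsto (fun y : ℝ => (y + t - 1 / 2) * log (1 + t / y) - t) atTop (𝓝 0) := by
  have hlog : Tendsto (fun y : ℝ => log (1 + t / y)) atTop (𝓝 0) := by
    have h := ((tendsto_const_nhds (x := t)).div_atTop tendsto_id).const_add 1
    simpa using h.log (by norm_num)
  have h := ((tendsto_mul_log_one_add_div_atTop t).add (hlog.const_mul (t - 1 / 2))).sub_const t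
  simp only [mul_zero, add_zero, sub_self] at h
  exact h.congr fun y => by ring

lemma tendsto_one_div_mul_add_natCast_add {a : ℝ} (ha : 0 < a) (x c : ℝ) :
    Tendsto (fun N : ℕ => 1 / (a * (x + N) + c)) atTop (𝓝 0) := by
  have h : Tendsto (fun N : ℕ => a * (x + N) + c) atTop atTop :=
    tendsto_atTop_add_const_right _ c <|
      (tendsto_atTop_add_const_left _ x tendsto_natCast_atTop_atTop).const_mul_atTop ha
  exact h.inv_tendsto_atTop.congr fun N => (one_div _).symm

lemma le_of_le_add_one_of_tendsto {f : ℝ → ℝ} {x L : ℝ} (hstep : ∀ y ≥ x, f y ≤ f (y + 1))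
    (hlim : Tendsto (fun n : ℕ => f (x + n)) atTop (𝓝 L)) : f x ≤ L := by
  have hmono : Monotone fun n : ℕ => f (x + n) := monotone_nat_of_le_succ fun n => by
    simpa [add_assoc] using hstep (x + n) (by simp)
  simpa using hmono.ge_of_tendsto hlim 0

lemma log_Gamma_add_one {y : ℝ} (hy : 0 < y) : log (Gamma (y + 1)) = log (Gamma y) + log y := by
  rw [Gamma_add_one hy.ne', log_mul hy.ne' (Gamma_pos_of_pos hy).ne', add_comm]

noncomputable def stirlingRemainder (x : ℝ) : ℝ :=
  log (Gamma x) - ((x - 1 / 2) * log x - x + log (2 * π) / 2)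

lemma stirlingRemainder_sub_stirlingRemainder_add_one {x : ℝ} (hx : 0 < x) :
    stirlingRemainder x - stirlingRemainder (x + 1) = (x + 1 / 2) * log (1 + x⁻¹) - 1 := by
  rw [show 1 + x⁻¹ = (x + 1) / x by field_simp, log_div (by linarith) hx.ne']
  simp only [stirlingRemainder, log_Gamma_add_one hx]
  ring

lemma stirlingRemainder_add_sub_stirlingRemainder {y t : ℝ} (hy : 0 < y) (ht : 0 ≤ t) :
    stirlingRemainder (y + t) - stirlingRemainder y
      = (log (Gamma (y + t)) - log (Gamma y) - t * log y)
        - ((y + t - 1 / 2) * log (1 + t / y) - t) := by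
  rw [show 1 + t / y = (y + t) / y by field_simp, log_div (by linarith) hy.ne']
  simp only [stirlingRemainder]
  ring

lemma stirlingRemainder_natCast {n : ℕ} (hn : n ≠ 0) :
    stirlingRemainder n = log (Stirling.stirlingSeq n) - log √π := by
  have hn0 : (0 : ℝ) < n := by positivity
  rw [Stirling.log_stirlingSeq_formula, ← Gamma_nat_eq_factorial, log_Gamma_add_one hn0,
    log_mul two_ne_zero hn0.ne', log_div hn0.ne' (exp_pos 1).ne', log_exp, log_sqrt pi_pos.le,
    stirlingRemainder, log_mul two_ne_zero pi_ne_zero]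
  ring

lemma tendsto_stirlingRemainder_natCast :
    Tendsto (fun n : ℕ => stirlingRemainder n) atTop (𝓝 0) := by
  have h := (Stirling.tendsto_stirlingSeq_sqrt_pi.log (by positivity)).sub_const (log √π)
  rw [sub_self] at h
  exact h.congr' ((eventually_ne_atTop 0).mono fun n hn => (stirlingRemainder_natCast hn).symm)

lemma tendsto_stirlingRemainder_natCast_add {t : ℝ} (ht0 : 0 < t) (ht1 : t ≤ 1) :
    Tendsto (fun n : ℕ => stirlingRemainder (n + t)) atTop (𝓝 0) := by
  rw [← tendsto_add_atTop_iff_nat 1]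
  have hk : Tendsto (fun n : ℕ => ((n + 1 : ℕ) : ℝ)) atTop atTop :=
    tendsto_natCast_atTop_atTop.comp (tendsto_add_atTop_nat 1)
  have hupper := (tendsto_stirlingRemainder_natCast.comp (tendsto_add_atTop_nat 1)).sub
    ((tendsto_add_sub_half_mul_log_one_add_div_sub t).comp hk)
  have hlower := hupper.sub (tendsto_log_nat_add_one_sub_log.const_mul t)
  simp only [sub_zero, mul_zero] at hupper hlower
  -- log-convexity of `Γ` puts `log Γ (k + t) - log Γ k` between `t log (k - 1)` and `t log k`
  refine tendsto_of_tendsto_of_tendsto_of_le_of_le' hlower hupper ?_ ?_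
  · filter_upwards [eventually_ge_atTop 1] with n hn
    have hΓ := BohrMollerup.f_add_nat_ge convexOn_log_Gamma (fun hy => log_Gamma_add_one hy)
      (show 2 ≤ n + 1 by omega) ht0
    have hid := stirlingRemainder_add_sub_stirlingRemainder (y := ((n + 1 : ℕ) : ℝ))
      (by positivity) ht0.le
    simp only [Function.comp_apply, Nat.cast_add, Nat.cast_one, add_sub_cancel_right] at hΓ hid ⊢
    linarith
  · filter_upwards with n
    have hΓ := BohrMollerup.f_add_nat_le convexOn_log_Gamma (fun hy => log_Gamma_add_one hy)
      (Nat.add_one_ne_zero n) ht0 ht1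
    have hid := stirlingRemainder_add_sub_stirlingRemainder (y := ((n + 1 : ℕ) : ℝ))
      (by positivity) ht0.le
    simp only [Function.comp_apply, Nat.cast_add, Nat.cast_one] at hΓ hid ⊢
    linarith

lemma tendsto_stirlingRemainder_add_natCast {x : ℝ} (hx : 0 < x) :
    Tendsto (fun N : ℕ => stirlingRemainder (x + N)) atTop (𝓝 0) := by
  obtain ⟨m, hmx, hxm⟩ : ∃ m : ℕ, (m : ℝ) < x ∧ x ≤ m + 1 :=
    ⟨⌈x⌉₊ - 1, by
      rw [Nat.cast_pred (Nat.ceil_pos.2 hx)]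
      constructor <;> linarith [Nat.le_ceil x, Nat.ceil_lt_add_one hx.le]⟩
  have h := (tendsto_stirlingRemainder_natCast_add (t := x - m) (by linarith) (by linarith)).comp
    (tendsto_add_atTop_nat m)
  exact h.congr fun N => by simp only [Function.comp, Nat.cast_add]; ring_nf

lemma stirlingRemainder_le {x : ℝ} (hx : 0 < x) : stirlingRemainder x ≤ 1 / (12 * x) := by
  have hlim := (tendsto_stirlingRemainder_add_natCast hx).sub
    (tendsto_one_div_mul_add_natCast_add (by norm_num : (0 : ℝ) < 12) x 0)
  simp only [add_zero, sub_zero] at hlim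
  have h := le_of_le_add_one_of_tendsto (f := fun y => stirlingRemainder y - 1 / (12 * y))
    (fun y hy => ?_) hlim
  · linarith
  · have := stirlingRemainder_sub_stirlingRemainder_add_one (hx.trans_le hy)
    have := mul_log_one_add_inv_sub_one_le (hx.trans_le hy)
    linarith

lemma le_stirlingRemainder {x : ℝ} (hx : 1 ≤ x) : 1 / (12 * x + 1) ≤ stirlingRemainder x := by
  have hlim := (tendsto_one_div_mul_add_natCast_add (by norm_num : (0 : ℝ) < 12) x 1).sub
    (tendsto_stirlingRemainder_add_natCast (by linarith))
  simp only [sub_zero] at hlim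
  have h := le_of_le_add_one_of_tendsto (f := fun y => 1 / (12 * y + 1) - stirlingRemainder y)
    (fun y hy => ?_) hlim
  · linarith
  · have := stirlingRemainder_sub_stirlingRemainder_add_one (by linarith : 0 < y)
    have := le_mul_log_one_add_inv_sub_one (hx.trans hy)
    linarith

lemma Gamma_add_one_div_gosper_eq_exp {x : ℝ} (hx : 0 < x) :
    Gamma (x + 1) / (x ^ x * exp (-x) * √(2 * π * (x + 1 / 6)))
      = exp (stirlingRemainder x - log (1 + (6 * x)⁻¹) / 2) := by
  have hx6 : x + 1 / 6 = x * (1 + (6 * x)⁻¹) := by field_simp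
  have hD : 0 < x ^ x * exp (-x) * √(2 * π * (x + 1 / 6)) := by positivity
  rw [← exp_log (div_pos (Gamma_pos_of_pos (by linarith)) hD), log_div (by positivity) hD.ne',
    log_mul (by positivity) (by positivity), log_mul (by positivity) (by positivity), log_rpow hx,
    log_exp, log_sqrt (by positivity), hx6, log_mul (x := 2 * π) (by positivity) (by positivity),
    log_mul hx.ne' (by positivity), log_Gamma_add_one hx, stirlingRemainder]
  ring_nf

lemma abs_stirlingRemainder_sub_half_log_le {x : ℝ} (hx : 1 ≤ x) :
    |stirlingRemainder x - log (1 + (6 * x)⁻¹) / 2| ≤ 1 / (2 * x ^ 2) := by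
  have hx0 : 0 < x := by linarith
  have hμ_le := stirlingRemainder_le hx0
  have hμ_ge := le_stirlingRemainder hx
  have hL_le := half_log_one_add_inv_le (by positivity : 0 < 6 * x)
  have hL_ge := add_cube_div_three_le_half_log_one_add_inv (by positivity : 0 < 6 * x)
  rw [show 2 * (6 * x) + 1 = 12 * x + 1 by ring] at hL_le hL_ge
  have hupper : 1 / (12 * x) - 1 / (12 * x + 1) ≤ 1 / (2 * x ^ 2) := by
    rw [div_sub_div _ _ (by positivity) (by positivity),
      div_le_div_iff₀ (by positivity) (by positivity)]
    nlinarith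
  have hlower : 1 / (12 * (6 * x) * (6 * x + 1) * (12 * x + 1)) ≤ 1 / (2 * x ^ 2) := by
    rw [div_le_div_iff₀ (by positivity) (by positivity)]
    nlinarith
  rw [abs_le]
  constructor <;> linarith [one_div_pos.2 (show 0 < 3 * (12 * x + 1) ^ 3 by positivity)]

theorem gosper_approx_quadratic_error :
    ∃ C > (0:ℝ), ∃ X > (0:ℝ), ∀ x ≥ X,
      |Real.Gamma (x + 1) / (x ^ x * Real.exp (-x) * Real.sqrt (2 * π * (x + 1/6))) - 1|
        ≤ C / x ^ 2 := by
  refine ⟨1, one_pos, 1, one_pos, fun x hx => ?_⟩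
  have hδ := abs_stirlingRemainder_sub_half_log_le hx
  have hhalf : 1 / (2 * x ^ 2) ≤ 1 / 2 := by gcongr; nlinarith
  rw [Gamma_add_one_div_gosper_eq_exp (by linarith)]
  calc _ ≤ 2 * |stirlingRemainder x - log (1 + (6 * x)⁻¹) / 2| := abs_exp_sub_one_le (by linarith)
    _ ≤ 2 * (1 / (2 * x ^ 2)) := by gcongr
    _ = 1 / x ^ 2 := by field_simp
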